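/- Let γ₀ = (9 + √3)/26. Then 468γ₀³ − 486γ₀² + 162γ₀ + 54 = 12042/169 − 27√3/169. In particular the multiplicity e_R(𝓘(F);R) = 12042/169 − 27√3/169 is an irrational real number. -/

import Mathlib

/-! γ₀ = (9 + √3)/26 is a root of 26γ² − 18γ + 3, so modulo this quadratic the cubic reduces to
the linear polynomial (945 − 54γ)/13. Its value at γ₀ is a rational number minus a nonzero rational
multiple of √3, hence irrational. -/

open Real

lemma nine_add_sqrt_three_div_twentysix_isRoot :
    26 * ((9 + √3) / 26) ^ 2 - 18 * ((9 + √3) / 26) + 3 = 0 := by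
  linear_combination (1 / 26 : ℝ) * Real.sq_sqrt (show (0 : ℝ) ≤ 3 by norm_num)

lemma cubic_eq_linear_of_isRoot {γ : ℝ} (h : 26 * γ ^ 2 - 18 * γ + 3 = 0) :
    468 * γ ^ 3 - 486 * γ ^ 2 + 162 * γ + 54 = (945 - 54 * γ) / 13 := by
  linear_combination (18 * γ - 81 / 13) * h

lemma irrational_ratCast_sub_ratCast_mul_sqrt_three (q r : ℚ) (hr : r ≠ 0) :
    Irrational (q - r * √3) :=
  ((Nat.prime_three.irrational_sqrt).ratCast_mul hr).ratCast_sub q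

theorem stmt_13 (γ₀ : ℝ) (hγ : γ₀ = (9 + Real.sqrt 3) / 26) :
    468 * γ₀ ^ 3 - 486 * γ₀ ^ 2 + 162 * γ₀ + 54 = 12042 / 169 - 27 * Real.sqrt 3 / 169 ∧
    Irrational (12042 / 169 - 27 * Real.sqrt 3 / 169) := by
  subst hγ
  refine ⟨?_, ?_⟩
  · rw [cubic_eq_linear_of_isRoot nine_add_sqrt_three_div_twentysix_isRoot]
    ring
  · convert irrational_ratCast_sub_ratCast_mul_sqrt_three (12042 / 169) (27 / 169) (by norm_num)
      using 1
    push_cast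
    ring
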